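/- arXiv:1511.01378 — 2 statements merged into one kernel-verified Lean document; each statement's English description precedes it below -/
import Mathlib

section
/- Let A be a commutative ring of characteristic zero and consider the connection ∇ = d + Γ_{-r} t^{-r} dt + (lower order terms) on V = A((t))^⊕n, where r > 1 and Γ_{-r} ∈ Mat_n(A) is an invertible matrix. Then for Λ = A[[t]]^⊕n and any integer s, the map ∇: t^{-s}Λ → t^{-r-s}Λ dt is a quasi-isomorphism (an isomorphism of the associated two-term complexes); consequently the de Rham cohomology H^*_dR of this differential module vanishes, i.e. the connection is Fredholm with vanishing cohomology. -/
/-!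
Let `Λ = A[[t]]^{⊕ n}`. The derivative lowers the `t`-adic valuation by `1 < r` and the
non-leading part of `Γ` lowers it by less than `r`, so `∇` maps `t^k Λ` into `t^{k-r} Λ`, and the
induced map `t^k Λ / t^{k+1} Λ → t^{k-r} Λ / t^{k-r+1} Λ` is multiplication by the invertible
matrix `Γ₋ᵣ`. Injectivity follows by looking at the lowest coefficient of an element of the kernel;
surjectivity onto `t^{k-r} Λ` by successive approximation, which converges because `A((t))` is
`t`-adically complete. Every vector lies in some `t^k Λ`, so `∇` is bijective on all of `V`.
-/

open HahnSeries

/-- The formal derivative `d/dt` on Laurent series, as an `A`-linear map. -/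
noncomputable def lderiv (A : Type*) [CommRing A] : LaurentSeries A →ₗ[A] LaurentSeries A where
  toFun f :=
    { coeff := fun n => (n + 1 : ℤ) • f.coeff (n + 1)
      isPWO_support' := by
        have hsub : (Function.support fun n : ℤ => (n + 1 : ℤ) • f.coeff (n + 1)) ⊆
            (fun m : ℤ => m - 1) '' f.support := by
          intro n hn
          refine ⟨n + 1, fun h0 => ?_, by ring⟩
          apply hn
          simp [h0]
        exact ((f.isPWO_support.image_of_monotoneOn
          (fun a _ b _ hab => sub_le_sub_right hab 1)).mono hsub) }
  map_add' f g := by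
    ext n
    simp [smul_add]
  map_smul' a f := by
    ext n
    simp only [HahnSeries.coeff_smul, RingHom.id_apply, zsmul_eq_mul, smul_eq_mul]
    push_cast
    ring

/-- The connection `∇ = d + Γ dt` (with `dt` suppressed) on `A((t))^{⊕ n}`,
given by a connection matrix `Γ` with Laurent series entries. -/
noncomputable def nablaFun {A : Type*} [CommRing A] {n : ℕ}
    (Γ : Matrix (Fin n) (Fin n) (LaurentSeries A)) :
    (Fin n → LaurentSeries A) → (Fin n → LaurentSeries A) :=
  fun v i => lderiv A (v i) + ∑ j, Γ i j * v j

/-- `t^{s} A[[t]]^{⊕ n}` inside `A((t))^{⊕ n}`: the vectors all of whose coefficients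
below `s` vanish. -/
def latticeSet (A : Type*) [CommRing A] (n : ℕ) (s : ℤ) : Set (Fin n → LaurentSeries A) :=
  {v | ∀ i, ∀ m : ℤ, m < s → (v i).coeff m = 0}

open scoped Matrix

namespace HahnSeries

lemma le_of_mem_support_of_forall_lt {Γ R : Type*} [LinearOrder Γ] [Zero R] {x : HahnSeries Γ R}
    {a i : Γ} (hx : ∀ j < a, x.coeff j = 0) (hi : i ∈ x.support) : a ≤ i :=
  not_lt.1 fun h => hi (hx i h)

variable {Γ R : Type*} [AddCommMonoid Γ] [LinearOrder Γ] [IsOrderedCancelAddMonoid Γ]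
  [NonUnitalNonAssocSemiring R] {x y : HahnSeries Γ R} {a b : Γ}

theorem coeff_mul_eq_zero_of_lt_add (hx : ∀ i < a, x.coeff i = 0) (hy : ∀ j < b, y.coeff j = 0)
    {c : Γ} (hc : c < a + b) : (x * y).coeff c = 0 := by
  refine coeff_mul.trans (Finset.sum_eq_zero fun ij hij => ?_)
  obtain ⟨hi, hj, rfl⟩ := Finset.mem_antidiagonal.1 hij
  exact absurd hc (not_lt.2 (add_le_add (le_of_mem_support_of_forall_lt hx hi)
    (le_of_mem_support_of_forall_lt hy hj)))

theorem coeff_mul_add_of_forall_lt (hx : ∀ i < a, x.coeff i = 0) (hy : ∀ j < b, y.coeff j = 0) :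
    (x * y).coeff (a + b) = x.coeff a * y.coeff b := by
  refine coeff_mul.trans (Finset.sum_eq_single (a, b) (fun ij hij hne => ?_) fun hab => ?_)
  · obtain ⟨hi, hj, hsum⟩ := Finset.mem_antidiagonal.1 hij
    have hai := le_of_mem_support_of_forall_lt hx hi
    have hbj := le_of_mem_support_of_forall_lt hy hj
    refine absurd (Prod.ext (hai.antisymm' ?_) (hbj.antisymm' ?_)) hne
    · exact not_lt.1 fun h => hsum.not_gt (add_lt_add_of_lt_of_le h hbj)
    · exact not_lt.1 fun h => hsum.not_gt (add_lt_add_of_le_of_lt hai h)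
  · by_cases ha : x.coeff a = 0
    · rw [ha, zero_mul]
    by_cases hb : y.coeff b = 0
    · rw [hb, mul_zero]
    exact absurd (Finset.mem_antidiagonal.2 ⟨ha, hb, rfl⟩) hab

end HahnSeries

section Lattice

variable {A : Type*} [CommRing A] {n : ℕ}

def coeffVec (v : Fin n → LaurentSeries A) (m : ℤ) : Fin n → A := fun j => (v j).coeff m

lemma coeffVec_sub (v w : Fin n → LaurentSeries A) (m : ℤ) :
    coeffVec (v - w) m = coeffVec v m - coeffVec w m := rfl

def coeffMatrix (Γ : Matrix (Fin n) (Fin n) (LaurentSeries A)) (m : ℤ) :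
    Matrix (Fin n) (Fin n) A :=
  Matrix.of fun i j => (Γ i j).coeff m

def lattice (A : Type*) [CommRing A] (n : ℕ) (s : ℤ) : AddSubgroup (Fin n → LaurentSeries A) where
  carrier := latticeSet A n s
  zero_mem' _ _ _ := rfl
  add_mem' hv hw i m hm := by simp [hv i m hm, hw i m hm]
  neg_mem' hv i m hm := by simp [hv i m hm]

lemma lattice_anti {s s' : ℤ} (h : s ≤ s') : lattice A n s' ≤ lattice A n s :=
  fun _ hv i m hm => hv i m (hm.trans_le h)

lemma exists_mem_lattice (v : Fin n → LaurentSeries A) : ∃ s, v ∈ lattice A n s := by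
  obtain ⟨s, hs⟩ := Finite.exists_ge fun i => (v i).order
  exact ⟨s, fun i m hm => HahnSeries.coeff_eq_zero_of_lt_order (hm.trans_le (hs i))⟩

lemma eq_zero_of_forall_mem_lattice {s : ℤ} {v : Fin n → LaurentSeries A}
    (hv : ∀ d : ℕ, v ∈ lattice A n (s + d)) : v = 0 := by
  funext i
  ext m
  exact hv (m - s + 1).toNat i m (by omega)

lemma mem_lattice_add_one_of_coeffVec_eq_zero {s : ℤ} {v : Fin n → LaurentSeries A}
    (hv : v ∈ lattice A n s) (h : coeffVec v s = 0) : v ∈ lattice A n (s + 1) := by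
  intro i m hm
  rcases (Int.lt_add_one_iff.1 hm).lt_or_eq with hlt | rfl
  · exact hv i m hlt
  · exact congrFun h i

noncomputable def monomialVec (k : ℤ) (c : Fin n → A) : Fin n → LaurentSeries A :=
  fun j => HahnSeries.single k (c j)

lemma monomialVec_mem_lattice (k : ℤ) (c : Fin n → A) : monomialVec k c ∈ lattice A n k :=
  fun _ _ hm => HahnSeries.coeff_single_of_ne hm.ne

lemma coeffVec_monomialVec (k : ℤ) (c : Fin n → A) : coeffVec (monomialVec k c) k = c :=
  funext fun _ => HahnSeries.coeff_single_same _ _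

lemma sub_mem_lattice_of_le {u : ℕ → Fin n → LaurentSeries A} {s : ℤ}
    (hu : ∀ d : ℕ, u (d + 1) - u d ∈ lattice A n (s + d)) {d e : ℕ} (hde : d ≤ e) :
    u e - u d ∈ lattice A n (s + d) := by
  induction e, hde using Nat.le_induction with
  | base => simp
  | succ e hde ih =>
    rw [← sub_add_sub_cancel]
    exact add_mem (lattice_anti (by omega) (hu e)) ih

/-- Completeness of `A((t))^{⊕ n}` for the `t`-adic filtration by the lattices. -/
lemma exists_forall_sub_mem_lattice {u : ℕ → Fin n → LaurentSeries A} {s : ℤ}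
    (hu₀ : u 0 ∈ lattice A n s) (hu : ∀ d : ℕ, u (d + 1) - u d ∈ lattice A n (s + d)) :
    ∃ v, ∀ d : ℕ, v - u d ∈ lattice A n (s + d) := by
  have hbdd (j : Fin n) :
      BddBelow (Function.support fun x => (u (x - s + 1).toNat j).coeff x) := by
    refine ⟨s, fun x hx => not_lt.1 fun hxs => hx ?_⟩
    dsimp only
    rw [show (x - s + 1).toNat = 0 by omega]
    exact hu₀ j x hxs
  refine ⟨fun j => HahnSeries.ofSuppBddBelow _ (hbdd j), fun d i x hx => ?_⟩
  have := sub_mem_lattice_of_le hu (show (x - s + 1).toNat ≤ d by omega) i x (by omega)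
  simp only [Pi.sub_apply, HahnSeries.coeff_sub, HahnSeries.coeff_ofSuppBddBelow] at this ⊢
  rw [← neg_sub, this, neg_zero]

end Lattice

section Nabla

variable {A : Type*} [CommRing A] {n : ℕ} {r : ℤ} {Γ : Matrix (Fin n) (Fin n) (LaurentSeries A)}

lemma coeff_lderiv (f : LaurentSeries A) (m : ℤ) :
    (lderiv A f).coeff m = (m + 1 : ℤ) • f.coeff (m + 1) := rfl

lemma nablaFun_add (v w : Fin n → LaurentSeries A) :
    nablaFun Γ (v + w) = nablaFun Γ v + nablaFun Γ w := by
  funext i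
  simp only [nablaFun, Pi.add_apply, map_add, mul_add, Finset.sum_add_distrib]
  abel

lemma nablaFun_sub (v w : Fin n → LaurentSeries A) :
    nablaFun Γ (v - w) = nablaFun Γ v - nablaFun Γ w :=
  eq_sub_of_add_eq (by rw [← nablaFun_add, sub_add_cancel])

lemma nablaFun_zero : nablaFun Γ 0 = 0 := by
  simpa using nablaFun_sub (Γ := Γ) 0 0

lemma coeff_sum_mul_of_mem_lattice (hpole : ∀ i j, ∀ m < -r, (Γ i j).coeff m = 0) {s : ℤ}
    {v : Fin n → LaurentSeries A} (hv : v ∈ lattice A n s) (i : Fin n) :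
    (∀ m < s - r, (∑ j, Γ i j * v j).coeff m = 0) ∧
      (∑ j, Γ i j * v j).coeff (s - r) = (coeffMatrix Γ (-r) *ᵥ coeffVec v s) i := by
  simp only [HahnSeries.coeff_sum]
  refine ⟨fun m hm => Finset.sum_eq_zero fun j _ =>
    HahnSeries.coeff_mul_eq_zero_of_lt_add (hpole i j) (hv j) (by omega), ?_⟩
  rw [sub_eq_neg_add]
  exact Finset.sum_congr rfl fun j _ => HahnSeries.coeff_mul_add_of_forall_lt (hpole i j) (hv j)

variable (hpole : ∀ i j, ∀ m < -r, (Γ i j).coeff m = 0)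
include hpole

lemma nablaFun_mem_lattice (hr : 1 ≤ r) {s : ℤ} {v : Fin n → LaurentSeries A}
    (hv : v ∈ lattice A n s) : nablaFun Γ v ∈ lattice A n (s - r) := by
  intro i m hm
  rw [nablaFun, HahnSeries.coeff_add, coeff_lderiv, hv i (m + 1) (by omega), smul_zero, zero_add]
  exact (coeff_sum_mul_of_mem_lattice hpole hv i).1 m hm

lemma coeffVec_nablaFun (hr : 1 < r) {s : ℤ} {v : Fin n → LaurentSeries A}
    (hv : v ∈ lattice A n s) :
    coeffVec (nablaFun Γ v) (s - r) = coeffMatrix Γ (-r) *ᵥ coeffVec v s := by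
  funext i
  rw [coeffVec, nablaFun, HahnSeries.coeff_add, coeff_lderiv, hv i (s - r + 1) (by omega),
    smul_zero, zero_add]
  exact (coeff_sum_mul_of_mem_lattice hpole hv i).2

end Nabla

section Bijectivity

variable {A : Type*} [CommRing A] {n : ℕ} {r : ℤ} {Γ : Matrix (Fin n) (Fin n) (LaurentSeries A)}

/-- Each step cancels the lowest coefficient of the residual `w - ∇u` by a monomial correction. -/
noncomputable def approxPreimage (Γ : Matrix (Fin n) (Fin n) (LaurentSeries A)) (r s : ℤ)
    (w : Fin n → LaurentSeries A) : ℕ → Fin n → LaurentSeries A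
  | 0 => 0
  | d + 1 => approxPreimage Γ r s w d + monomialVec (s + d) ((coeffMatrix Γ (-r))⁻¹ *ᵥ
      coeffVec (w - nablaFun Γ (approxPreimage Γ r s w d)) (s + d - r))

lemma approxPreimage_succ_sub_mem_lattice (s : ℤ) (w : Fin n → LaurentSeries A) (d : ℕ) :
    approxPreimage Γ r s w (d + 1) - approxPreimage Γ r s w d ∈ lattice A n (s + d) := by
  rw [approxPreimage, add_sub_cancel_left]
  exact monomialVec_mem_lattice _ _

variable (hr : 1 < r) (hpole : ∀ i j, ∀ m < -r, (Γ i j).coeff m = 0)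
  (hlead : IsUnit (coeffMatrix Γ (-r)))
include hr hpole hlead

theorem nablaFun_injective : Function.Injective (nablaFun Γ) := by
  suffices h : ∀ v, nablaFun Γ v = 0 → v = 0 from
    fun v w hvw => sub_eq_zero.1 (h _ (by rw [nablaFun_sub, hvw, sub_self]))
  intro v hv
  obtain ⟨s, hs⟩ := exists_mem_lattice v
  refine eq_zero_of_forall_mem_lattice (s := s) fun d => ?_
  induction d with
  | zero => simpa using hs
  | succ d ih =>
    have hcoeff : coeffMatrix Γ (-r) *ᵥ coeffVec v (s + d) = 0 := by
      rw [← coeffVec_nablaFun hpole hr ih, hv]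
      rfl
    rw [Nat.cast_succ, ← add_assoc]
    refine mem_lattice_add_one_of_coeffVec_eq_zero ih ?_
    apply Matrix.mulVec_injective_of_isUnit hlead
    rw [hcoeff, Matrix.mulVec_zero]

lemma sub_nablaFun_monomialVec_mem_lattice {k : ℤ} {e : Fin n → LaurentSeries A}
    (he : e ∈ lattice A n (k - r)) :
    e - nablaFun Γ (monomialVec k ((coeffMatrix Γ (-r))⁻¹ *ᵥ coeffVec e (k - r))) ∈
      lattice A n (k - r + 1) := by
  have hmono := monomialVec_mem_lattice k ((coeffMatrix Γ (-r))⁻¹ *ᵥ coeffVec e (k - r))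
  refine mem_lattice_add_one_of_coeffVec_eq_zero
    (sub_mem he (nablaFun_mem_lattice hpole hr.le hmono)) ?_
  rw [coeffVec_sub, coeffVec_nablaFun hpole hr hmono, coeffVec_monomialVec, Matrix.mulVec_mulVec,
    Matrix.mul_nonsing_inv _ ((Matrix.isUnit_iff_isUnit_det _).1 hlead), Matrix.one_mulVec,
    sub_self]

lemma sub_nablaFun_approxPreimage_mem_lattice {s : ℤ} {w : Fin n → LaurentSeries A}
    (hw : w ∈ lattice A n (s - r)) (d : ℕ) :
    w - nablaFun Γ (approxPreimage Γ r s w d) ∈ lattice A n (s + d - r) := by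
  induction d with
  | zero => simpa [approxPreimage, nablaFun_zero] using hw
  | succ d ih =>
    rw [approxPreimage, nablaFun_add, ← sub_sub]
    exact lattice_anti (by omega) (sub_nablaFun_monomialVec_mem_lattice hr hpole hlead ih)

theorem nablaFun_surjOn (s : ℤ) :
    Set.SurjOn (nablaFun Γ) (lattice A n s) (lattice A n (s - r)) := by
  intro w hw
  obtain ⟨v, hv⟩ := exists_forall_sub_mem_lattice (u := approxPreimage Γ r s w)
    (zero_mem _) (approxPreimage_succ_sub_mem_lattice s w)
  refine ⟨v, by simpa [approxPreimage] using hv 0, ?_⟩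
  have hres (d : ℕ) : w - nablaFun Γ v ∈ lattice A n (s - r + d) := by
    have h := sub_mem (sub_nablaFun_approxPreimage_mem_lattice hr hpole hlead hw d)
      (nablaFun_mem_lattice hpole hr.le (hv d))
    rw [nablaFun_sub, sub_sub_sub_cancel_right] at h
    exact lattice_anti (by omega) h
  exact (sub_eq_zero.1 (eq_zero_of_forall_mem_lattice hres)).symm

theorem nablaFun_bijOn_lattice (s : ℤ) :
    Set.BijOn (nablaFun Γ) (lattice A n s) (lattice A n (s - r)) :=
  ⟨fun _ hv => nablaFun_mem_lattice hpole hr.le hv, (nablaFun_injective hr hpole hlead).injOn,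
    nablaFun_surjOn hr hpole hlead s⟩

theorem nablaFun_bijective : Function.Bijective (nablaFun Γ) := by
  refine ⟨nablaFun_injective hr hpole hlead, fun w => ?_⟩
  obtain ⟨s, hs⟩ := exists_mem_lattice w
  obtain ⟨v, -, hv⟩ := nablaFun_surjOn hr hpole hlead (s + r) (by rwa [add_sub_cancel_right])
  exact ⟨v, hv⟩

end Bijectivity

theorem stmt_3_general {A : Type*} [CommRing A] {n : ℕ}
    (r : ℤ) (hr : 1 < r)
    (Γ : Matrix (Fin n) (Fin n) (LaurentSeries A))
    (hpole : ∀ i j, ∀ m : ℤ, m < -r → (Γ i j).coeff m = 0)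
    (hlead : IsUnit (Matrix.of fun i j => (Γ i j).coeff (-r))) :
    (∀ s : ℤ, Set.BijOn (nablaFun Γ) (latticeSet A n (-s)) (latticeSet A n (-(r + s)))) ∧
      Function.Bijective (nablaFun Γ) := by
  refine ⟨fun s => ?_, nablaFun_bijective hr hpole hlead⟩
  rw [show -(r + s) = -s - r by ring]
  exact nablaFun_bijOn_lattice hr hpole hlead (-s)

/-- **Example \ref{e:invertible}** (irregular connections with invertible leading term are
Fredholm with vanishing cohomology).  Let `A` be a commutative ring of characteristic zero and
`∇ = d + Γ₋ᵣ t^{-r} dt + (lower order terms)` a connection on `A((t))^{⊕ n}` with `r > 1` and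
invertible leading term `Γ₋ᵣ ∈ Matₙ(A)`.  Then for every integer `s`, `∇` maps
`t^{-s} Λ` bijectively onto `t^{-r-s} Λ dt` (for `Λ = A[[t]]^{⊕ n}`), and consequently the
de Rham cohomology of this differential module vanishes, i.e. `∇ : V → V dt` is bijective. -/
theorem stmt_3 {A : Type*} [CommRing A] [CharZero A] {n : ℕ}
    (r : ℤ) (hr : 1 < r)
    (Γ : Matrix (Fin n) (Fin n) (LaurentSeries A))
    (hpole : ∀ i j, ∀ m : ℤ, m < -r → (Γ i j).coeff m = 0)
    (hlead : IsUnit (Matrix.of fun i j => (Γ i j).coeff (-r))) :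
    (∀ s : ℤ, Set.BijOn (nablaFun Γ) (latticeSet A n (-s)) (latticeSet A n (-(r + s)))) ∧
      Function.Bijective (nablaFun Γ) :=
  stmt_3_general r hr Γ hpole hlead
end

section
/- In the polynomial ring R = B[{x_i}_{i∈I}] over an integral domain B (I any index set), if an ideal J̄ satisfies J̄ = J̄² and J̄ is contained in the ideal m generated by all the variables x_i, then J̄ = 0. -/
/-!
If `J = J²` and `J ⊆ m`, then `J = J ^ r ⊆ m ^ r` for every `r`. A polynomial lies in `m ^ r`
exactly when its coefficients of total degree `< r` vanish, so the powers of `m` meet in `0`.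
-/

theorem Ideal.le_pow_of_mul_self_eq {R : Type*} [CommSemiring R] {J m : Ideal R}
    (hsq : J * J = J) (hm : J ≤ m) (n : ℕ) : J ≤ m ^ n := by
  induction n with
  | zero => simp
  | succ n ih =>
    calc J = J * J := hsq.symm
      _ ≤ m ^ n * m := Ideal.mul_mono ih hm
      _ = m ^ (n + 1) := (pow_succ m n).symm

theorem MvPolynomial.iInf_pow_idealOfVars (σ R : Type*) [CommSemiring R] :
    ⨅ n, idealOfVars σ R ^ n = ⊥ := by
  refine eq_bot_iff.mpr fun p hp => ?_
  ext d
  have hd : p ∈ idealOfVars σ R ^ (d.degree + 1) := Ideal.mem_iInf.mp hp _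
  exact (mem_pow_idealOfVars_iff' _ p).mp hd d (Nat.lt_succ_self _)

theorem stmt_9_general {B : Type*} [CommRing B] {I : Type*}
    (J : Ideal (MvPolynomial I B))
    (hsq : J = J * J)
    (hm : J ≤ Ideal.span (Set.range (MvPolynomial.X : I → MvPolynomial I B))) :
    J = ⊥ := by
  rw [eq_bot_iff, ← MvPolynomial.iInf_pow_idealOfVars I B]
  exact le_iInf (Ideal.le_pow_of_mul_self_eq hsq.symm hm)

/-- **Key step of Lemma \ref{l:affine-fp}**: in the polynomial ring `R = B[{xᵢ}_{i ∈ I}]` over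
an integral domain `B` (with `I` an arbitrary index set), if an ideal `J̄` satisfies
`J̄ = J̄²` and `J̄` is contained in the ideal generated by all the variables `xᵢ`,
then `J̄ = 0`. -/
theorem stmt_9 {B : Type*} [CommRing B] [IsDomain B] {I : Type*}
    (J : Ideal (MvPolynomial I B))
    (hsq : J = J * J)
    (hm : J ≤ Ideal.span (Set.range (MvPolynomial.X : I → MvPolynomial I B))) :
    J = ⊥ :=
  stmt_9_general J hsq hm
end
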